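/- arXiv:1803.06128 — 5 statements merged into one kernel-verified Lean document; each statement's English description precedes it below -/
import Mathlib

section
/- Let A be an associative algebra over a commutative ring k, and let δ : A → A ⊗ A be a k-linear map satisfying the Leibniz rule δ(ab) = δ(a)·b + a·δ(b) with respect to the outer bimodule structure on A ⊗ A (i.e., a(b'⊗b'')c = ab'⊗b''c). Define the cyclic derivation D = μ ∘ τ ∘ δ, where τ is the flip map a'⊗a'' ↦ a''⊗a' and μ is multiplication. Then D vanishes on all commutators: D([f,g]) = 0 for all f, g ∈ A. -/
open TensorProduct

/-- If `δ : A → A ⊗ A` is a `k`-linear derivation with respect to the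
outer bimodule structure on `A ⊗ A`, then the associated cyclic derivation
`D = μ ∘ τ ∘ δ` vanishes on all commutators. -/
theorem cyclic_derivation_kills_commutators
    {k A : Type*} [CommRing k] [Ring A] [Algebra k A]
    (δ : A →ₗ[k] A ⊗[k] A)
    (hδ : ∀ a b : A, δ (a * b) =
      TensorProduct.map LinearMap.id (LinearMap.mulRight k b) (δ a) +
      TensorProduct.map (LinearMap.mulLeft k a) LinearMap.id (δ b))
    (f g : A) :
    LinearMap.mul' k A ((TensorProduct.comm k A A) (δ (f * g - g * f))) = 0 := by
  have key : ∀ (b : A) (t : A ⊗[k] A),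
      LinearMap.mul' k A ((TensorProduct.comm k A A)
        (TensorProduct.map LinearMap.id (LinearMap.mulRight k b) t)) =
      LinearMap.mul' k A ((TensorProduct.comm k A A)
        (TensorProduct.map (LinearMap.mulLeft k b) LinearMap.id t)) := by
    intro b t
    induction t using TensorProduct.induction_on with
    | zero => simp
    | tmul x y => simp [mul_assoc]
    | add u v hu hv => simp [map_add, hu, hv]
  simp only [map_sub, hδ, map_add, key g (δ f), key f (δ g)]
  abel
end

section
/- In the free associative algebra k⟨x₁,…,xₙ⟩ over a field k of characteristic 0, let D_{x_i} denote the cyclic derivative with respect to x_i, defined on a word w by D_{x_i}(w) = Σ_{w = u x_i v} v·u. Then for every element φ of the free algebra, one has Σᵢ [xᵢ, D_{x_i}(φ)] = 0. -/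
/-! On `A ⊗ A` let `A` act by the outer bimodule structure `a (u ⊗ v) b = a u ⊗ v b` and by the
inner one `a ∗ (u ⊗ v) ∗ b = u b ⊗ a v`. The map `φ ↦ ∑ᵢ [xᵢ, δᵢ φ]`, with the commutator taken
for the inner structure, is again a double derivation, as is `φ ↦ 1 ⊗ φ - φ ⊗ 1`; both send `xⱼ`
to `1 ⊗ xⱼ - xⱼ ⊗ 1`, so they agree on the free algebra. Applying `μ ∘ τ`, which turns inner
commutators into ordinary ones and kills `1 ⊗ φ - φ ⊗ 1`, gives the theorem. -/

open TensorProduct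

section DoubleDerivation

variable {R A : Type*} [CommRing R] [Ring A] [Algebra R A]

def IsDoubleDerivation (d : A →ₗ[R] A ⊗[R] A) : Prop :=
  ∀ a b, d (a * b) =
    map LinearMap.id (LinearMap.mulRight R b) (d a) + map (LinearMap.mulLeft R a) LinearMap.id (d b)

def innerCommutator (x : A) : A ⊗[R] A →ₗ[R] A ⊗[R] A :=
  map LinearMap.id (LinearMap.mulLeft R x) - map (LinearMap.mulRight R x) LinearMap.id

theorem innerCommutator_tmul (x u v : A) :
    innerCommutator (R := R) x (u ⊗ₜ v) = u ⊗ₜ (x * v) - (u * x) ⊗ₜ v := by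
  simp [innerCommutator]

theorem innerCommutator_map_id_mulRight (x b : A) (t : A ⊗[R] A) :
    innerCommutator x (map LinearMap.id (LinearMap.mulRight R b) t) =
      map LinearMap.id (LinearMap.mulRight R b) (innerCommutator x t) := by
  induction t using TensorProduct.induction_on with
  | zero => simp
  | tmul u v => simp [innerCommutator_tmul, mul_assoc]
  | add s t hs ht => simp only [map_add, hs, ht]

theorem innerCommutator_map_mulLeft_id (x a : A) (t : A ⊗[R] A) :
    innerCommutator x (map (LinearMap.mulLeft R a) LinearMap.id t) =
      map (LinearMap.mulLeft R a) LinearMap.id (innerCommutator x t) := by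
  induction t using TensorProduct.induction_on with
  | zero => simp
  | tmul u v => simp [innerCommutator_tmul, mul_assoc]
  | add s t hs ht => simp only [map_add, hs, ht]

theorem mul'_comm_innerCommutator (x : A) (t : A ⊗[R] A) :
    LinearMap.mul' R A (TensorProduct.comm R A A (innerCommutator x t)) =
      x * LinearMap.mul' R A (TensorProduct.comm R A A t) -
        LinearMap.mul' R A (TensorProduct.comm R A A t) * x := by
  induction t using TensorProduct.induction_on with
  | zero => simp
  | tmul u v => simp [innerCommutator_tmul, mul_assoc]
  | add s t hs ht => simp only [map_add, hs, ht, mul_add, add_mul]; abel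

namespace IsDoubleDerivation

theorem map_one {d : A →ₗ[R] A ⊗[R] A} (hd : IsDoubleDerivation d) : d 1 = 0 := by
  simpa using hd 1 1

theorem zero : IsDoubleDerivation (0 : A →ₗ[R] A ⊗[R] A) := fun _ _ => by simp

theorem add {d e : A →ₗ[R] A ⊗[R] A} (hd : IsDoubleDerivation d) (he : IsDoubleDerivation e) :
    IsDoubleDerivation (d + e) := fun a b => by
  simp only [LinearMap.add_apply, hd a b, he a b, map_add]; abel

theorem innerCommutator_comp {d : A →ₗ[R] A ⊗[R] A} (hd : IsDoubleDerivation d) (x : A) :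
    IsDoubleDerivation (innerCommutator x ∘ₗ d) := fun a b => by
  simp only [LinearMap.comp_apply, hd a b, map_add, innerCommutator_map_id_mulRight,
    innerCommutator_map_mulLeft_id]

theorem one_tmul_sub_tmul_one :
    IsDoubleDerivation (TensorProduct.mk R A A 1 - (TensorProduct.mk R A A).flip 1) :=
  fun a b => by
  simp only [LinearMap.sub_apply, mk_apply, LinearMap.flip_apply, map_sub, map_tmul,
    LinearMap.id_apply, LinearMap.mulRight_apply, LinearMap.mulLeft_apply, one_mul, mul_one]
  abel

theorem ext_freeAlgebra {X : Type*}
    {d e : FreeAlgebra R X →ₗ[R] FreeAlgebra R X ⊗[R] FreeAlgebra R X}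
    (hd : IsDoubleDerivation d) (he : IsDoubleDerivation e)
    (h : ∀ x, d (FreeAlgebra.ι R x) = e (FreeAlgebra.ι R x)) : d = e := by
  ext φ
  induction φ using FreeAlgebra.induction with
  | grade0 r => simp [Algebra.algebraMap_eq_smul_one, hd.map_one, he.map_one]
  | grade1 x => exact h x
  | mul a b ha hb => rw [hd a b, he a b, ha, hb]
  | add a b ha hb => rw [map_add, map_add, ha, hb]

end IsDoubleDerivation

end DoubleDerivation

theorem sum_commutator_cyclic_derivative_eq_zero_general
    {k : Type*} [Field k] {n : ℕ}
    (δ : Fin n → (FreeAlgebra k (Fin n) →ₗ[k]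
      FreeAlgebra k (Fin n) ⊗[k] FreeAlgebra k (Fin n)))
    (hLeib : ∀ i (a b : FreeAlgebra k (Fin n)), δ i (a * b) =
      TensorProduct.map LinearMap.id (LinearMap.mulRight k b) (δ i a) +
      TensorProduct.map (LinearMap.mulLeft k a) LinearMap.id (δ i b))
    (hgen : ∀ i j, δ i (FreeAlgebra.ι k j) =
      if i = j then (1 : FreeAlgebra k (Fin n)) ⊗ₜ[k] 1 else 0)
    (φ : FreeAlgebra k (Fin n)) :
    ∑ i : Fin n,
      (FreeAlgebra.ι k i *
          LinearMap.mul' k (FreeAlgebra k (Fin n))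
            ((TensorProduct.comm k _ _) (δ i φ)) -
        LinearMap.mul' k (FreeAlgebra k (Fin n))
            ((TensorProduct.comm k _ _) (δ i φ)) * FreeAlgebra.ι k i) = 0 := by
  have hsum : ∑ i, innerCommutator (FreeAlgebra.ι k i) ∘ₗ δ i =
      TensorProduct.mk k _ _ 1 - (TensorProduct.mk k _ _).flip 1 := by
    refine IsDoubleDerivation.ext_freeAlgebra ?_ IsDoubleDerivation.one_tmul_sub_tmul_one
      fun j => ?_
    · exact Finset.sum_induction _ IsDoubleDerivation (fun _ _ => IsDoubleDerivation.add)
        IsDoubleDerivation.zero fun i _ => IsDoubleDerivation.innerCommutator_comp (hLeib i) _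
    · simp [hgen, apply_ite, innerCommutator_tmul]
  simp_rw [← mul'_comm_innerCommutator, ← map_sum,
    ← LinearMap.comp_apply (f := innerCommutator _), ← LinearMap.sum_apply, hsum]
  simp

/-- In the free associative algebra `k⟨x₁,…,xₙ⟩` over a field of
characteristic `0`, let `∂/∂xᵢ` be the double derivations determined by
`∂xⱼ/∂xᵢ = δᵢⱼ 1⊗1` and the Leibniz rule for the outer bimodule structure, and
let `D_{xᵢ} = μ ∘ τ ∘ ∂/∂xᵢ` be the corresponding cyclic derivatives.  Then for
every `φ` in the free algebra, `∑ᵢ [xᵢ, D_{xᵢ}(φ)] = 0`. -/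
theorem sum_commutator_cyclic_derivative_eq_zero
    {k : Type*} [Field k] [CharZero k] {n : ℕ}
    (δ : Fin n → (FreeAlgebra k (Fin n) →ₗ[k]
      FreeAlgebra k (Fin n) ⊗[k] FreeAlgebra k (Fin n)))
    (hLeib : ∀ i (a b : FreeAlgebra k (Fin n)), δ i (a * b) =
      TensorProduct.map LinearMap.id (LinearMap.mulRight k b) (δ i a) +
      TensorProduct.map (LinearMap.mulLeft k a) LinearMap.id (δ i b))
    (hgen : ∀ i j, δ i (FreeAlgebra.ι k j) =
      if i = j then (1 : FreeAlgebra k (Fin n)) ⊗ₜ[k] 1 else 0)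
    (φ : FreeAlgebra k (Fin n)) :
    ∑ i : Fin n,
      (FreeAlgebra.ι k i *
          LinearMap.mul' k (FreeAlgebra k (Fin n))
            ((TensorProduct.comm k _ _) (δ i φ)) -
        LinearMap.mul' k (FreeAlgebra k (Fin n))
            ((TensorProduct.comm k _ _) (δ i φ)) * FreeAlgebra.ι k i) = 0 :=
  sum_commutator_cyclic_derivative_eq_zero_general δ hLeib hgen φ
end

section
/- (Inverse function theorem for formal power series in one noncommuting setting, specialized) Let k be a commutative ring and let H be a k-algebra endomorphism of the formal power series ring k[[x₁,…,xₙ]] (continuous, i.e., H(xᵢ) ∈ (x₁,…,xₙ)) such that the induced k-linear map on m/m², where m = (x₁,…,xₙ), is an isomorphism. Then H is a k-algebra automorphism. -/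
/-!
Choose `f j ∈ m` with `H (f j) ≡ X j mod m²` and let `G` be the substitution `X j ↦ f j`.
Then `H ∘ G` is the identity modulo `m²` on the variables, and so is `G ∘ H`, because `H`
is injective on `m/m²`. An algebra endomorphism `K` with `K (X j) ≡ X j mod m²` satisfies
`K x ≡ x mod m^(d+1)` for every `x ∈ m^d`, so it is bijective on the `m`-adically complete
ring `k[[X]]`: injective because `⋂ m^d = 0`, surjective by successive approximation.
Hence `H` has a left and a right inverse.
-/

section AdicComplete

variable {R M : Type*} [CommRing R] [AddCommGroup M] [Module R M] {I : Ideal R}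

theorem IsHausdorff.injective_of_sub_mem_pow_succ_smul_top [IsHausdorff I M] {φ : M →+ M}
    (hφ : ∀ d, ∀ x ∈ (I ^ d • ⊤ : Submodule R M),
      φ x - x ∈ (I ^ (d + 1) • ⊤ : Submodule R M)) :
    Function.Injective φ := by
  refine (injective_iff_map_eq_zero φ).mpr fun x hx ↦ IsHausdorff.haus' (I := I) x fun d ↦ ?_
  rw [SModEq.sub_mem, sub_zero]
  induction d with
  | zero => simp
  | succ d ih => simpa [hx] using hφ d x ih

theorem IsAdicComplete.surjective_of_sub_mem_pow_succ_smul_top [IsAdicComplete I M] {φ : M →+ M}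
    (hφ : ∀ d, ∀ x ∈ (I ^ d • ⊤ : Submodule R M),
      φ x - x ∈ (I ^ (d + 1) • ⊤ : Submodule R M)) :
    Function.Surjective φ := by
  have pow_le {m n : ℕ} (h : m ≤ n) : (I ^ n • ⊤ : Submodule R M) ≤ I ^ m • ⊤ :=
    Submodule.smul_mono_left (Ideal.pow_le_pow_right h)
  have map_mem d x (hx : x ∈ (I ^ d • ⊤ : Submodule R M)) :
      φ x ∈ (I ^ d • ⊤ : Submodule R M) := by
    simpa using add_mem hx (pow_le d.le_succ (hφ d x hx))
  intro y
  let x : ℕ → M := fun d ↦ Nat.rec 0 (fun _ x ↦ x + (y - φ x)) d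
  have residual_mem d : y - φ (x d) ∈ (I ^ d • ⊤ : Submodule R M) := by
    induction d with
    | zero => simp
    | succ d ih =>
      have : y - φ (x (d + 1)) = -(φ (y - φ (x d)) - (y - φ (x d))) := by
        simp only [x, map_add]; abel
      rw [this]
      exact neg_mem (hφ d _ ih)
  have cauchy {m n : ℕ} (h : m ≤ n) : x m ≡ x n [SMOD (I ^ m • ⊤ : Submodule R M)] := by
    induction n, h using Nat.le_induction with
    | base => rfl
    | succ n hmn ih =>
      refine ih.trans ?_
      rw [SModEq.sub_mem, show x n - x (n + 1) = -(y - φ (x n)) by simp only [x]; abel]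
      exact neg_mem (pow_le hmn (residual_mem n))
  obtain ⟨L, hL⟩ := IsPrecomplete.prec' x cauchy
  refine ⟨L, (IsHausdorff.eq_iff_smodEq (I := I)).mpr fun d ↦ ?_⟩
  rw [SModEq.sub_mem, show φ L - y = φ (L - x d) - (y - φ (x d)) by simp only [map_sub]; abel]
  exact sub_mem (map_mem d _ (SModEq.sub_mem.mp (hL d).symm)) (residual_mem d)

end AdicComplete

section TangentToIdentity

variable {R : Type*} [CommRing R]

theorem Ideal.mem_of_sub_mem_sq {I : Ideal R} {x y : R} (hx : x ∈ I) (h : y - x ∈ I ^ 2) :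
    y ∈ I := by
  simpa using add_mem hx (Ideal.pow_le_self two_ne_zero h)

variable (K : R →+* R)

theorem RingHom.sub_mem_span_sq_of_mem_span {s : Set R} (h0 : ∀ x, K x - x ∈ Ideal.span s)
    (hs : ∀ a ∈ s, K a - a ∈ Ideal.span s ^ 2) {x : R} (hx : x ∈ Ideal.span s) :
    K x - x ∈ Ideal.span s ^ 2 := by
  induction hx using Submodule.span_induction with
  | mem a ha => exact hs a ha
  | zero => simp
  | add a b _ _ ha hb => simpa [add_sub_add_comm] using add_mem ha hb
  | smul r a haI ha =>
    have hKa : K a ∈ Ideal.span s := Ideal.mem_of_sub_mem_sq haI ha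
    have : K (r • a) - r • a = (K r - r) * K a + r * (K a - a) := by
      simp only [smul_eq_mul, map_mul]; ring
    rw [this]
    exact add_mem (sq (Ideal.span s) ▸ Ideal.mul_mem_mul (h0 r) hKa)
      (Ideal.mul_mem_left _ r ha)

theorem RingHom.sub_mem_pow_succ_of_mem_pow {I : Ideal R} (h0 : ∀ x, K x - x ∈ I)
    (h1 : ∀ x ∈ I, K x - x ∈ I ^ 2) (d : ℕ) {x : R} (hx : x ∈ I ^ d) :
    K x - x ∈ I ^ (d + 1) := by
  induction d generalizing x with
  | zero => simpa using h0 x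
  | succ d ih =>
    rw [pow_succ] at hx
    refine Submodule.mul_induction_on hx (fun a ha b hb ↦ ?_) fun a b ha hb ↦ ?_
    · have hKb : K b ∈ I := Ideal.mem_of_sub_mem_sq hb (h1 b hb)
      have : K (a * b) - a * b = (K a - a) * K b + a * (K b - b) := by rw [map_mul]; ring
      rw [this]
      refine add_mem ?_ ?_
      · exact pow_succ I (d + 1) ▸ Ideal.mul_mem_mul (ih ha) hKb
      · exact pow_add I d 2 ▸ Ideal.mul_mem_mul ha (h1 b hb)
    · simpa [add_sub_add_comm] using add_mem ha hb

end TangentToIdentity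

namespace MvPowerSeries

variable {σ R : Type*} [CommRing R]

theorem mem_span_X_image_of_coeff_eq_zero (s : Finset σ) {φ : MvPowerSeries σ R}
    (h : ∀ m : σ →₀ ℕ, (∀ i ∈ s, m i = 0) → coeff m φ = 0) :
    φ ∈ Ideal.span (X '' s) := by
  classical
  induction s using Finset.induction_on generalizing φ with
  | empty =>
    have : φ = 0 := ext fun m ↦ by simpa using h m (by simp)
    simp [this]
  | insert a s ha ih =>
    let ψ : MvPowerSeries σ R := fun m ↦ if m a = 0 then coeff m φ else 0
    have hψ : ψ ∈ Ideal.span (X '' s) := ih fun m hm ↦ by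
      change (if m a = 0 then coeff m φ else 0) = 0
      split_ifs with hma
      · exact h m (by simpa [hma] using hm)
      · rfl
    obtain ⟨χ, hχ⟩ : X a ∣ φ - ψ := X_dvd_iff.mpr fun m hm ↦ by
      change coeff m φ - (if m a = 0 then coeff m φ else 0) = 0
      simp [hm]
    rw [← sub_add_cancel φ ψ, hχ]
    refine add_mem (Ideal.mul_mem_right _ _ (Ideal.subset_span ⟨a, by simp, rfl⟩))
      (Ideal.span_mono (Set.image_mono (by simp)) hψ)

theorem sub_C_constantCoeff_mem_span_range_X [Finite σ] (φ : MvPowerSeries σ R) :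
    φ - C (constantCoeff φ) ∈ Ideal.span (Set.range X) := by
  cases nonempty_fintype σ
  simpa using mem_span_X_image_of_coeff_eq_zero Finset.univ (φ := φ - C (constantCoeff φ))
    fun m hm ↦ by
      obtain rfl : m = 0 := Finsupp.ext fun i ↦ hm i (Finset.mem_univ i)
      simp

theorem constantCoeff_eq_zero_of_mem_span_range_X {φ : MvPowerSeries σ R}
    (hφ : φ ∈ Ideal.span (Set.range X)) : constantCoeff φ = 0 :=
  (Ideal.span_le (I := RingHom.ker constantCoeff)).mpr
    (Set.range_subset_iff.mpr fun i ↦ by simp) hφ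

theorem _root_.AlgHom.mem_span_range_X_of_mem (K : MvPowerSeries σ R →ₐ[R] MvPowerSeries σ R)
    (hK : ∀ i, K (X i) ∈ Ideal.span (Set.range X)) {x : MvPowerSeries σ R}
    (hx : x ∈ Ideal.span (Set.range X)) : K x ∈ Ideal.span (Set.range X) :=
  (Ideal.span_le (I := Ideal.comap K _)).mpr
    (Set.range_subset_iff.mpr fun i ↦ Ideal.mem_comap.mpr (hK i)) hx

variable [Finite σ]

theorem _root_.AlgHom.sub_mem_span_range_X (K : MvPowerSeries σ R →ₐ[R] MvPowerSeries σ R)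
    (hK : ∀ i, K (X i) ∈ Ideal.span (Set.range X)) (x : MvPowerSeries σ R) :
    K x - x ∈ Ideal.span (Set.range X) := by
  have hx := sub_C_constantCoeff_mem_span_range_X x
  have : K x - x = K (x - C (constantCoeff x)) - (x - C (constantCoeff x)) := by
    simp [c_eq_algebraMap]
  rw [this]
  exact sub_mem (K.mem_span_range_X_of_mem hK hx) hx

theorem _root_.AlgHom.sub_mem_span_range_X_sq (K : MvPowerSeries σ R →ₐ[R] MvPowerSeries σ R)
    (hK : ∀ i, K (X i) - X i ∈ Ideal.span (Set.range X) ^ 2) {x : MvPowerSeries σ R}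
    (hx : x ∈ Ideal.span (Set.range X)) : K x - x ∈ Ideal.span (Set.range X) ^ 2 := by
  have hKX i : K (X i) ∈ Ideal.span (Set.range X) :=
    Ideal.mem_of_sub_mem_sq (Ideal.subset_span (Set.mem_range_self i)) (hK i)
  exact RingHom.sub_mem_span_sq_of_mem_span K.toRingHom (K.sub_mem_span_range_X hKX)
    (Set.forall_mem_range.mpr hK) hx

theorem _root_.AlgHom.bijective_of_sub_X_mem_sq
    (K : MvPowerSeries σ R →ₐ[R] MvPowerSeries σ R)
    (hK : ∀ i, K (X i) - X i ∈ Ideal.span (Set.range X) ^ 2) : Function.Bijective K := by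
  have hKX i : K (X i) ∈ Ideal.span (Set.range X) :=
    Ideal.mem_of_sub_mem_sq (Ideal.subset_span (Set.mem_range_self i)) (hK i)
  let I : Ideal (MvPowerSeries σ R) := Ideal.span (Set.range X)
  have hφ d x (hx : x ∈ (I ^ d • ⊤ : Ideal _)) :
      K x - x ∈ (I ^ (d + 1) • ⊤ : Ideal _) := by
    simp only [smul_eq_mul, Ideal.mul_top] at hx ⊢
    exact K.toRingHom.sub_mem_pow_succ_of_mem_pow (K.sub_mem_span_range_X hKX)
      (fun _ ↦ K.sub_mem_span_range_X_sq hK) d hx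
  exact ⟨IsHausdorff.injective_of_sub_mem_pow_succ_smul_top (φ := K.toAddMonoidHom) hφ,
    IsAdicComplete.surjective_of_sub_mem_pow_succ_smul_top (φ := K.toAddMonoidHom) hφ⟩

end MvPowerSeries

open MvPowerSeries

/-- (Inverse function theorem for formal power series.)  Let `k`
be a commutative ring and `H` a `k`-algebra endomorphism of `k[[x₁,…,xₙ]]`
mapping the augmentation ideal `m = (x₁,…,xₙ)` into itself and inducing a
bijection on `m/m²`.  Then `H` is an automorphism. -/
theorem inverse_function_theorem_power_series
    {k : Type*} [CommRing k] {n : ℕ}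
    (H : MvPowerSeries (Fin n) k →ₐ[k] MvPowerSeries (Fin n) k)
    (m : Ideal (MvPowerSeries (Fin n) k))
    (hm : m = Ideal.span (Set.range (MvPowerSeries.X : Fin n → MvPowerSeries (Fin n) k)))
    (hHm : ∀ f ∈ m, H f ∈ m)
    -- the induced map `m/m² → m/m²` is injective …
    (hinj : ∀ f ∈ m, H f ∈ m ^ 2 → f ∈ m ^ 2)
    -- … and surjective
    (hsurj : ∀ g ∈ m, ∃ f ∈ m, g - H f ∈ m ^ 2) :
    Function.Bijective H := by
  subst hm
  have hX (j : Fin n) : (X j : MvPowerSeries (Fin n) k) ∈ Ideal.span (Set.range X) :=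
    Ideal.subset_span (Set.mem_range_self j)
  choose f hfm hf using fun j ↦ hsurj (X j) (hX j)
  let G := substAlgHom (R := k) <| hasSubst_of_constantCoeff_zero fun j ↦
    constantCoeff_eq_zero_of_mem_span_range_X (hfm j)
  have hGX j : G (X j) = f j := substAlgHom_X _ j
  have hHG_X : ∀ j, (H.comp G) (X j) - X j ∈ Ideal.span (Set.range X) ^ 2 := fun j ↦ by
    simpa [hGX] using neg_mem (hf j)
  have hGH_X : ∀ j, (G.comp H) (X j) - X j ∈ Ideal.span (Set.range X) ^ 2 := fun j ↦ by
    have hGHX : G (H (X j)) ∈ Ideal.span (Set.range X) :=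
      G.mem_span_range_X_of_mem (fun i ↦ hGX i ▸ hfm i) (hHm _ (hX j))
    refine hinj _ (sub_mem hGHX (hX j)) ?_
    simpa using (H.comp G).sub_mem_span_range_X_sq hHG_X (hHm _ (hX j))
  have hGH := (G.comp H).bijective_of_sub_X_mem_sq hGH_X
  have hHG := (H.comp G).bijective_of_sub_X_mem_sq hHG_X
  rw [AlgHom.coe_comp] at hGH hHG
  exact ⟨hGH.1.of_comp, hHG.2.of_comp⟩
end

section
/- (Finite determinacy, commutative shadow of Theorem 3.16 for the one-loop quiver) Let Φ ∈ ℂ[[x]] with Φ ∈ (x)², and suppose the Jacobi ideal (Φ'(x)) contains (x)^r for some r ≥ 0 (equivalently ℂ[[x]]/(Φ') is finite-dimensional with ord(Φ') ≤ r). Then Φ is (r+1)-determined: any Ψ ∈ ℂ[[x]] with Ψ − Φ ∈ (x)^{r+2} satisfies Ψ = H(Φ) for some continuous ℂ-algebra automorphism H of ℂ[[x]]. -/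
/-!
Since `(Φ') ⊇ (x)^r`, the derivative has order at most `r`, so `Φ` has order `n ≤ r + 1`,
and `n ≥ 2`. Hence `Ψ` agrees with `Φ` up to degree `n`: both are `x^n` times a series with
the same constant term `c ≠ 0`. Taking `n`-th roots (binomial series) writes each of them as
`c (x w)^n` with `w(0) ≠ 0`, the image of `c x^n` under the substitution `x ↦ x w`, which is an
automorphism because `x w` has a compositional inverse.
-/

open PowerSeries

namespace PowerSeries

section Subst

variable {R : Type*} [CommRing R] {P : R⟦X⟧}

theorem constantCoeff_subst_of_constantCoeff_eq_zero (hP : constantCoeff P = 0) (f : R⟦X⟧) :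
    constantCoeff (f.subst P) = constantCoeff f := by
  have hP₀ : HasSubst P := .of_constantCoeff_zero' hP
  obtain ⟨g, hg⟩ : X ∣ f - C (constantCoeff f) := X_dvd_iff.mpr (by simp)
  have hC : (C (constantCoeff f)).subst P = C (constantCoeff f) := subst_C _
  rw [← sub_add_cancel f (C (constantCoeff f)), hg, subst_add hP₀, subst_mul hP₀, subst_X hP₀, hC]
  simp [hP]

noncomputable def substAlgEquiv (hP : constantCoeff P = 0) (hP' : IsUnit (coeff 1 P)) :
    R⟦X⟧ ≃ₐ[R] R⟦X⟧ :=
  AlgEquiv.ofAlgHom (substAlgHom (.of_constantCoeff_zero' hP))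
    (substAlgHom (.substInvOfIsUnit P hP'))
    (AlgHom.ext fun f => by
      simp [coe_substAlgHom, subst_comp_subst_apply (.substInvOfIsUnit P hP')
        (.of_constantCoeff_zero' hP), subst_substInvOfIsUnit_left P hP hP', X_subst])
    (AlgHom.ext fun f => by
      simp [coe_substAlgHom, subst_comp_subst_apply (.of_constantCoeff_zero' hP)
        (.substInvOfIsUnit P hP'), subst_substInvOfIsUnit_right P hP hP', X_subst])

@[simp]
theorem substAlgEquiv_apply (hP : constantCoeff P = 0) (hP' : IsUnit (coeff 1 P)) (f : R⟦X⟧) :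
    substAlgEquiv hP hP' f = f.subst P := by
  simp [substAlgEquiv, coe_substAlgHom]

end Subst

theorem binomialSeries_nsmul {R A : Type*} [CommRing R] [BinomialRing R] [Ring A] [Algebra R A]
    (n : ℕ) (r : R) : binomialSeries A (n • r) = binomialSeries A r ^ n := by
  induction n with
  | zero => simp
  | succ n ih => rw [succ_nsmul, binomialSeries_add, ih, pow_succ]

theorem exists_pow_eq_of_constantCoeff_eq_one {A : Type*} [CommRing A] [Algebra ℚ A]
    {u : A⟦X⟧} (hu : constantCoeff u = 1) {n : ℕ} (hn : n ≠ 0) : ∃ w : A⟦X⟧, w ^ n = u := by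
  have hsubst : HasSubst (u - 1) := .of_constantCoeff_zero' (by simp [hu])
  refine ⟨(binomialSeries A (n⁻¹ : ℚ)).subst (u - 1), ?_⟩
  have hroot : binomialSeries A (n⁻¹ : ℚ) ^ n = 1 + X := by
    rw [← binomialSeries_nsmul, nsmul_eq_mul, mul_inv_cancel₀ (by exact_mod_cast hn),
      ← Nat.cast_one, binomialSeries_nat, pow_one]
  rw [← subst_pow hsubst, hroot, subst_add hsubst, subst_X hsubst, ← map_one C, subst_C]
  simp

section Derivative

variable {R : Type*} [CommSemiring R] {f : R⟦X⟧}

theorem X_pow_dvd_derivative {n : ℕ} (h : X ^ (n + 1) ∣ f) : X ^ n ∣ d⁄dX R f := by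
  rw [X_pow_dvd_iff] at h ⊢
  intro m hm
  rw [coeff_derivative, h (m + 1) (by omega), zero_mul]

theorem order_toNat_le_of_derivative_dvd_X_pow [Nontrivial R] {r : ℕ} (h : d⁄dX R f ∣ X ^ r) :
    f.order.toNat ≤ r + 1 := by
  by_contra! hr
  have hdvd : X ^ (r + 1) ∣ (X : R⟦X⟧) ^ r :=
    (X_pow_dvd_derivative ((pow_dvd_pow X hr).trans X_pow_order_dvd)).trans h
  simpa using X_pow_dvd_iff.mp hdvd r (by omega)

end Derivative

section Determinacy

variable {A : Type*} [CommRing A] [Algebra ℚ A]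

/-- The automorphism is the substitution `X ↦ X * (U / U(0)) ^ (1 / n)`. -/
theorem exists_algEquiv_apply_C_mul_X_pow {n : ℕ} (hn : n ≠ 0) {U : A⟦X⟧}
    (hU : IsUnit (constantCoeff U)) :
    ∃ E : A⟦X⟧ ≃ₐ[A] A⟦X⟧, (∀ f, constantCoeff (E f) = constantCoeff f) ∧
      E (C (constantCoeff U) * X ^ n) = X ^ n * U := by
  obtain ⟨w, hw⟩ := exists_pow_eq_of_constantCoeff_eq_one
    (u := C (↑hU.unit⁻¹ : A) * U) (by simp) hn
  have hP : constantCoeff (X * w) = 0 := by simp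
  have hP' : IsUnit (coeff 1 (X * w)) := by
    have := congrArg constantCoeff hw
    rw [map_pow, map_mul, constantCoeff_C, IsUnit.val_inv_mul] at this
    exact IsUnit.of_pow_eq_one (by simpa [coeff_succ_X_mul] using this) hn
  refine ⟨substAlgEquiv hP hP', fun f => ?_, ?_⟩
  · simp [constantCoeff_subst_of_constantCoeff_eq_zero hP]
  · have hsub : HasSubst (X * w) := .of_constantCoeff_zero' hP
    rw [substAlgEquiv_apply, subst_mul hsub, subst_C, subst_pow hsub, subst_X hsub, mul_pow, hw]
    change C (constantCoeff U) * _ = _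
    rw [mul_left_comm, ← mul_assoc (C _), ← map_mul, IsUnit.mul_val_inv, map_one, one_mul]

theorem exists_algEquiv_apply_eq_of_X_pow_succ_dvd_sub {n : ℕ} (hn : n ≠ 0) {Φ Ψ : A⟦X⟧}
    (hΦ : X ^ n ∣ Φ) (hc : IsUnit (coeff n Φ)) (hΨ : X ^ (n + 1) ∣ Ψ - Φ) :
    ∃ H : A⟦X⟧ ≃ₐ[A] A⟦X⟧, (∀ f, constantCoeff (H f) = constantCoeff f) ∧ H Φ = Ψ := by
  obtain ⟨U, rfl⟩ := hΦ
  obtain ⟨W, hW⟩ := hΨ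
  have hΨU : Ψ = X ^ n * (U + X * W) := by linear_combination hW
  have hU : coeff n (X ^ n * U) = constantCoeff U := by simp [coeff_X_pow_mul']
  have hUW : constantCoeff (U + X * W) = constantCoeff U := by simp
  obtain ⟨E, hE₀, hE⟩ := exists_algEquiv_apply_C_mul_X_pow hn (U := U) (hU ▸ hc)
  obtain ⟨E', hE'₀, hE'⟩ := exists_algEquiv_apply_C_mul_X_pow hn (U := U + X * W) (hUW ▸ hU ▸ hc)
  refine ⟨E.symm.trans E', fun f => ?_, ?_⟩
  · rw [AlgEquiv.trans_apply, hE'₀, ← hE₀, AlgEquiv.apply_symm_apply]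
  · rw [AlgEquiv.trans_apply, ← hE, AlgEquiv.symm_apply_apply, ← hUW, hE', hΨU]

end Determinacy

end PowerSeries

/-- (Finite determinacy in `ℂ[[x]]`.)  Let `Φ ∈ (x)²` and
suppose the Jacobi ideal `(Φ')` contains `(x)^r`.  Then `Φ` is
`(r+1)`-determined: any `Ψ` with `Ψ − Φ ∈ (x)^{r+2}` is obtained from `Φ` by a
continuous `ℂ`-algebra automorphism of `ℂ[[x]]`. -/
theorem finite_determinacy_one_variable
    (Φ Ψ : PowerSeries ℂ) (r : ℕ)
    (hΦ : Φ ∈ Ideal.span {(X : PowerSeries ℂ)} ^ 2)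
    (hjac : Ideal.span {(X : PowerSeries ℂ)} ^ r ≤
      Ideal.span {PowerSeries.derivative ℂ Φ})
    (hjet : Ψ - Φ ∈ Ideal.span {(X : PowerSeries ℂ)} ^ (r + 2)) :
    ∃ H : PowerSeries ℂ ≃ₐ[ℂ] PowerSeries ℂ,
      (∀ f ∈ Ideal.span {(X : PowerSeries ℂ)}, H f ∈ Ideal.span {(X : PowerSeries ℂ)}) ∧
      H Φ = Ψ := by
  rw [Ideal.span_singleton_pow, Ideal.mem_span_singleton] at hΦ hjet
  have hder : d⁄dX ℂ Φ ∣ X ^ r :=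
    Ideal.mem_span_singleton.mp (hjac (Ideal.pow_mem_pow (Ideal.mem_span_singleton_self X) r))
  have hΦ₀ : Φ ≠ 0 := by
    rintro rfl
    simp at hder
  have hn : 2 ≤ Φ.order.toNat := by
    by_contra! hn
    exact coeff_order hΦ₀ (X_pow_dvd_iff.mp hΦ _ hn)
  have hnr := order_toNat_le_of_derivative_dvd_X_pow hder
  obtain ⟨H, hH₀, hH⟩ := exists_algEquiv_apply_eq_of_X_pow_succ_dvd_sub (by omega)
    X_pow_order_dvd (coeff_order hΦ₀).isUnit ((pow_dvd_pow X (by omega)).trans hjet)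
  refine ⟨H, fun f hf => ?_, hH⟩
  rw [Ideal.mem_span_singleton, X_dvd_iff] at hf ⊢
  rw [hH₀, hf]
end

section
/- Let Q be a finite quiver and Φ a potential of the complete path algebra over ℂ. If Φ_*(cDer⁺) ⊇ m̂^{r+1}, where cDer⁺ denotes the cyclic derivations preserving the arrow ideal m̂, and Θ is a potential over the ring K of entire functions on ℂ with the same (r+1)-jet as Φ, then Θ_*(cDer⁺ over K) ⊇ n̂^{r+1}, where n̂ is the arrow ideal over K. (Jet-stability of the tangent-ideal condition under deformation of coefficients, via the Nakayama lemma.) -/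
open scoped Classical

noncomputable section

/-- All splittings `p = u.comp v` of a path `p` in a quiver. -/
def pathSplits {V : Type} [Quiver.{1} V] {i : V} : ∀ {j : V},
    Quiver.Path i j → List (Σ m : V, Quiver.Path i m × Quiver.Path m j)
  | _, Quiver.Path.nil => [⟨i, Quiver.Path.nil, Quiver.Path.nil⟩]
  | _, Quiver.Path.cons p e =>
      ⟨_, Quiver.Path.cons p e, Quiver.Path.nil⟩ ::
        (pathSplits p).map fun x => ⟨x.1, x.2.1, x.2.2.cons e⟩

/-- An axiomatic presentation of the complete path algebra `k̂Q` of a quiver `Q`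
with vertex set `V` over a commutative ring `k`: a `k`-algebra `A` whose
elements are formal series in paths.  `coeff p x` is the coefficient of the path
`p` in `x`, `ofCoeff` builds the series with prescribed coefficients (so `A` is
complete), `pathE p` is the path `p` viewed as an element, `1` is the sum of
the trivial paths, and multiplication is given by convolution over all
splittings of a path. -/
structure CompletePathAlgebra (k V : Type) [CommRing k] [Quiver.{1} V] where
  A : Type
  [ringA : Ring A]
  [algA : Algebra k A]
  coeff : ∀ {i j : V}, Quiver.Path i j → (A →ₗ[k] k)
  ofCoeff : (∀ i j : V, Quiver.Path i j → k) → A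
  pathE : ∀ {i j : V}, Quiver.Path i j → A
  coeff_ofCoeff : ∀ c (i j : V) (p : Quiver.Path i j), coeff p (ofCoeff c) = c i j p
  coeff_ext : ∀ x y : A, (∀ (i j : V) (p : Quiver.Path i j), coeff p x = coeff p y) → x = y
  coeff_pathE : ∀ {i j i' j' : V} (p : Quiver.Path i j) (q : Quiver.Path i' j'),
      coeff q (pathE p) =
        if (⟨i, j, p⟩ : Σ a b : V, Quiver.Path a b) = ⟨i', j', q⟩ then 1 else 0
  coeff_one : ∀ (i j : V) (p : Quiver.Path i j),
      coeff p (1 : A) = if p.length = 0 then 1 else 0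
  coeff_mul : ∀ (x y : A) (i j : V) (p : Quiver.Path i j),
      coeff p (x * y) =
        ((pathSplits p).map fun s => coeff s.2.1 x * coeff s.2.2 y).sum

attribute [instance] CompletePathAlgebra.ringA CompletePathAlgebra.algA

namespace CompletePathAlgebra

variable {k V : Type} [CommRing k] [Quiver.{1} V] (C : CompletePathAlgebra k V)

/-- The `r`-th power `m̂^r` of the arrow ideal: the series all of whose
coefficients in degrees `< r` vanish. -/
def mpow (r : ℕ) : Submodule k C.A where
  carrier := {x | ∀ ⦃i j : V⦄ (p : Quiver.Path i j), p.length < r → C.coeff p x = 0}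
  add_mem' := by
    intro x y hx hy i j p hp
    simp [map_add, hx p hp, hy p hp]
  zero_mem' := by intro i j p hp; simp
  smul_mem' := by
    intro c x hx i j p hp
    simp [map_smul, hx p hp]

/-- The closure of a `k`-subspace of `k̂Q` in the `m̂`-adic topology,
`U^cl = ⋂_r (U + m̂^r)`. -/
def cl (U : Submodule k C.A) : Submodule k C.A := ⨅ r : ℕ, U ⊔ C.mpow r

/-- The commutator subspace `[A,A]`. -/
def commSub : Submodule k C.A :=
  Submodule.span k {z : C.A | ∃ x y : C.A, z = x * y - y * x}

/-- The closed commutator subspace `[A,A]^cl`. -/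
def commCl : Submodule k C.A := C.cl C.commSub

/-- The cyclic derivative `Φ_*(D_a)` with respect to an arrow `a : i ⟶ j`:
the series whose coefficient at a path `q : j → i` is
`Σ_{q = v·u} (coefficient of the cycle `u·a·v` in `φ`)`. -/
def cycDeriv {i j : V} (a : i ⟶ j) (φ : C.A) : C.A :=
  C.ofCoeff fun i' j' q =>
    if h1 : i' = j then
      if h2 : j' = i then
        ((pathSplits (cast (by rw [h1, h2]) q : Quiver.Path j i)).map
          fun s => C.coeff ((Quiver.Path.cons s.2.2 a).comp s.2.1) φ).sum
      else 0
    else 0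

/-- The (not yet closed) two-sided ideal generated by the cyclic derivatives of
`φ`. -/
def jacSpan (φ : C.A) : Submodule k C.A :=
  Submodule.span k
    {z : C.A | ∃ (i j : V) (a : i ⟶ j) (u v : C.A), z = u * C.cycDeriv a φ * v}

/-- The Jacobi ideal `Ĵ(Q,Φ)`: the closure of the two-sided ideal generated by
the cyclic derivatives of `φ`. -/
def jac (φ : C.A) : Submodule k C.A := C.cl (C.jacSpan φ)

lemma mpow_antitone {r s : ℕ} (h : r ≤ s) : C.mpow s ≤ C.mpow r := by
  intro x hx i j p hp
  exact hx p (lt_of_lt_of_le hp h)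

end CompletePathAlgebra

end

/-- The ring of entire functions on the complex plane, as a subalgebra of
`ℂ → ℂ`. -/
def Entire : Subalgebra ℂ (ℂ → ℂ) where
  carrier := {f | Differentiable ℂ f}
  mul_mem' := fun hf hg => hf.mul hg
  add_mem' := fun hf hg => hf.add hg
  algebraMap_mem' := fun c => differentiable_const c

/-- Membership in the image of `Φ_*` on the cyclic derivations **preserving the
arrow ideal** (`cDer⁺`): as in `imCyc`, but the coefficient family `c` of the
cyclic derivation `Σ_{a,u,v} c_{a,u,v}·u·D_a·v` vanishes whenever `u` and `v`
are both trivial paths. -/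
def CompletePathAlgebra.imCycPlus {k V : Type} [CommRing k] [Quiver.{1} V]
    [Fintype V] [∀ i j : V, Fintype (i ⟶ j)]
    (C : CompletePathAlgebra k V) (φ : C.A) : Set C.A :=
  {x | ∃ c : ∀ (i j : V), (i ⟶ j) →
        ∀ (s m : V), Quiver.Path s m → ∀ (m' t : V), Quiver.Path m' t → k,
      (∀ (i j : V) (a : i ⟶ j) (s m : V) (u : Quiver.Path s m)
          (m' t : V) (v : Quiver.Path m' t),
        u.length = 0 → v.length = 0 → c i j a s m u m' t v = 0) ∧
      ∀ (s t : V) (q : Quiver.Path s t),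
        C.coeff q x =
          ((pathSplits q).map fun s1 =>
            ((pathSplits s1.2.2).map fun s2 =>
              ∑ i : V, ∑ j : V, ∑ a : (i ⟶ j),
                c i j a s s1.1 s1.2.1 s2.1 t s2.2.2 *
                  C.coeff s2.2.1 (C.cycDeriv a φ)).sum).sum}

/-!
The coefficients of the cyclic derivatives `D_a Θ` in degrees `≤ r` only depend on `Θ` modulo
`[Â, Â]^cl + n̂^{r+2}`, because `D_a` is invariant under rotation of cycles; so they are those of
`D_a Φ`. For a path `P` of length `r + 1`, take `D_P ∈ cDer⁺` over `ℂ` with `Φ_*(D_P) = P`; over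
`K` it gives `Θ_*(D_P) ≡ P` modulo `n̂^{r+2}`, since the terms that could see the higher
coefficients of `D_a Θ` are excluded from `cDer⁺`. Multiplying `D_P` on the right by a path `w`
gives `Θ_*(D_P w) ≡ P w` modulo higher degree, so a series in `n̂^{r+1}` is solved one degree at a
time, and the corrections, having ever longer right factors, sum to a derivation (topological
Nakayama).
-/

open Quiver

noncomputable section

variable {V : Type} [Quiver.{1} V]

lemma comp_eq_of_mem_pathSplits {i j : V} {p : Path i j} {s : Σ m : V, Path i m × Path m j}
    (hs : s ∈ pathSplits p) : s.2.1.comp s.2.2 = p := by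
  induction p with
  | nil =>
    obtain rfl := List.mem_singleton.mp hs
    rfl
  | cons p e ih =>
    simp only [pathSplits, List.mem_cons, List.mem_map] at hs
    rcases hs with rfl | ⟨t, ht, rfl⟩
    · rfl
    · simp [ih ht]

lemma length_add_length_of_mem_pathSplits {i j : V} {p : Path i j}
    {s : Σ m : V, Path i m × Path m j} (hs : s ∈ pathSplits p) :
    s.2.1.length + s.2.2.length = p.length := by
  rw [← Path.length_comp, comp_eq_of_mem_pathSplits hs]

lemma sum_pathSplits_comp {M : Type*} [AddCommMonoid M] {i b : V} (p : Path i b) {j : V}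
    (q : Path b j) (F : (Σ m : V, Path i m × Path m j) → M) :
    ((pathSplits (p.comp q)).map F).sum + F ⟨b, p, q⟩ =
      ((pathSplits q).map fun s => F ⟨s.1, p.comp s.2.1, s.2.2⟩).sum +
        ((pathSplits p).map fun s => F ⟨s.1, s.2.1, s.2.2.comp q⟩).sum := by
  induction q with
  | nil => simp [pathSplits, add_comm]
  | cons q e ih =>
    simp only [Path.comp_cons, pathSplits, List.map_cons, List.sum_cons, List.map_map,
      Function.comp_def]
    rw [add_assoc, ih fun s => F ⟨s.1, s.2.1, s.2.2.cons e⟩]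
    abel

lemma sum_pathSplits_assoc {M : Type*} [AddCommMonoid M] {i j : V} (w : Path i j)
    (H : (Σ m m' : V, Path i m × Path m m' × Path m' j) → M) :
    ((pathSplits w).map fun s =>
      ((pathSplits s.2.1).map fun t => H ⟨t.1, s.1, t.2.1, t.2.2, s.2.2⟩).sum).sum =
    ((pathSplits w).map fun s =>
      ((pathSplits s.2.2).map fun t => H ⟨s.1, t.1, s.2.1, t.2.1, t.2.2⟩).sum).sum := by
  induction w with
  | nil => rfl
  | cons w e ih =>
    simp only [pathSplits, List.map_cons, List.sum_cons, List.map_map, Function.comp_def]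
    rw [ih fun y => H ⟨y.1, y.2.1, y.2.2.1, y.2.2.2.1, y.2.2.2.2.cons e⟩]
    simp only [List.map_nil, List.sum_nil, add_zero, List.sum_map_add]
    abel

namespace CompletePathAlgebra

variable {k : Type} [CommRing k] (C : CompletePathAlgebra k V)

/-- The coefficient of the cyclic derivative `D_a z` at `w`: the sum of the coefficients of `z`
at the rotations `v a u` of the cycle `a w`, where `w = u v`. -/
def cycCoeff {i j : V} (a : i ⟶ j) (w : Path j i) : C.A →ₗ[k] k :=
  ((pathSplits w).map fun s => C.coeff ((s.2.2.cons a).comp s.2.1)).sum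

variable {C}

lemma cycCoeff_apply {i j : V} (a : i ⟶ j) (w : Path j i) (z : C.A) :
    C.cycCoeff a w z = ((pathSplits w).map fun s => C.coeff ((s.2.2.cons a).comp s.2.1) z).sum := by
  rw [cycCoeff, ← LinearMap.applyₗ_apply_apply (R := k) z, map_list_sum, List.map_map]
  rfl

lemma coeff_comp_cons_comp_mul {i j m : V} (a : i ⟶ j) (u : Path j m) (v : Path m i)
    (x y : C.A) :
    C.coeff ((v.cons a).comp u) (x * y) =
      ((pathSplits u).map fun t => C.coeff ((v.cons a).comp t.2.1) x * C.coeff t.2.2 y).sum +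
        ((pathSplits v).map fun t => C.coeff t.2.1 x * C.coeff ((t.2.2.cons a).comp u) y).sum := by
  have h := sum_pathSplits_comp (v.cons a) u fun t => C.coeff t.2.1 x * C.coeff t.2.2 y
  simp only [pathSplits, List.map_cons, List.sum_cons, List.map_map, Function.comp_def,
    Path.nil_comp] at h
  rw [C.coeff_mul, ← add_left_inj (C.coeff (v.cons a) x * C.coeff u y), h]
  abel

/-- Swapping `x` and `y` exchanges the two sums: this is the cyclic invariance of `D_a`. -/
lemma cycCoeff_mul {i j : V} (a : i ⟶ j) (w : Path j i) (x y : C.A) :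
    C.cycCoeff a w (x * y) =
      ((pathSplits w).map fun s => ((pathSplits s.2.2).map fun t =>
        C.coeff t.2.1 x * C.coeff ((t.2.2.cons a).comp s.2.1) y).sum).sum +
      ((pathSplits w).map fun s => ((pathSplits s.2.2).map fun t =>
        C.coeff t.2.1 y * C.coeff ((t.2.2.cons a).comp s.2.1) x).sum).sum := by
  simp only [cycCoeff_apply, coeff_comp_cons_comp_mul, List.sum_map_add]
  rw [add_comm, sum_pathSplits_assoc w fun z => C.coeff ((z.2.2.2.2.cons a).comp z.2.2.1) x *
    C.coeff z.2.2.2.1 y]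
  simp only [mul_comm]

lemma cycCoeff_mul_comm {i j : V} (a : i ⟶ j) (w : Path j i) (x y : C.A) :
    C.cycCoeff a w (x * y) = C.cycCoeff a w (y * x) := by
  rw [cycCoeff_mul, cycCoeff_mul, add_comm]

lemma mpow_le_ker_cycCoeff {i j : V} (a : i ⟶ j) (w : Path j i) {n : ℕ}
    (hn : w.length + 2 ≤ n) : C.mpow n ≤ LinearMap.ker (C.cycCoeff a w) := by
  intro z hz
  rw [LinearMap.mem_ker, cycCoeff_apply]
  refine List.sum_eq_zero fun _ hx => ?_
  obtain ⟨s, hs, rfl⟩ := List.mem_map.mp hx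
  refine hz _ ?_
  have := length_add_length_of_mem_pathSplits hs
  simp only [Path.length_comp, Path.length_cons]
  omega

lemma commSub_le_ker_cycCoeff {i j : V} (a : i ⟶ j) (w : Path j i) :
    C.commSub ≤ LinearMap.ker (C.cycCoeff a w) := by
  refine Submodule.span_le.mpr ?_
  rintro _ ⟨x, y, rfl⟩
  simp [cycCoeff_mul_comm a w x y]

lemma commCl_sup_mpow_le_ker_cycCoeff {i j : V} (a : i ⟶ j) (w : Path j i) {r : ℕ}
    (hw : w.length ≤ r) : C.commCl ⊔ C.mpow (r + 2) ≤ LinearMap.ker (C.cycCoeff a w) := by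
  have hmpow := mpow_le_ker_cycCoeff (C := C) a w (n := r + 2) (by omega)
  calc C.commCl ⊔ C.mpow (r + 2) ≤ (C.commSub ⊔ C.mpow (r + 2)) ⊔ C.mpow (r + 2) :=
        sup_le_sup_right (iInf_le _ (r + 2)) _
    _ ≤ LinearMap.ker (C.cycCoeff a w) :=
        sup_le (sup_le (commSub_le_ker_cycCoeff a w) hmpow) hmpow

lemma coeff_cycDeriv {i j : V} (a : i ⟶ j) (φ : C.A) (w : Path j i) :
    C.coeff w (C.cycDeriv a φ) = C.cycCoeff a w φ := by
  rw [cycDeriv, C.coeff_ofCoeff, dif_pos rfl, dif_pos rfl, cycCoeff_apply]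
  rfl

lemma coeff_cycDeriv_eq_zero {i j m m' : V} (a : i ⟶ j) (φ : C.A) (w : Path m m')
    (h : ¬(m = j ∧ m' = i)) : C.coeff w (C.cycDeriv a φ) = 0 := by
  rw [cycDeriv, C.coeff_ofCoeff]
  by_cases hm : m = j
  · rw [dif_pos hm, dif_neg fun hm' => h ⟨hm, hm'⟩]
  · rw [dif_neg hm]

lemma coeff_cycDeriv_eq_of_sub_mem {i j m m' : V} (a : i ⟶ j) {θ θ' : C.A} {r : ℕ}
    (h : θ - θ' ∈ C.commCl ⊔ C.mpow (r + 2)) (w : Path m m') (hw : w.length ≤ r) :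
    C.coeff w (C.cycDeriv a θ) = C.coeff w (C.cycDeriv a θ') := by
  by_cases hm : m = j ∧ m' = i
  · obtain ⟨rfl, rfl⟩ := hm
    rw [coeff_cycDeriv, coeff_cycDeriv, ← sub_eq_zero, ← map_sub]
    exact commCl_sup_mpow_le_ker_cycCoeff a w hw h
  · rw [coeff_cycDeriv_eq_zero a θ w hm, coeff_cycDeriv_eq_zero a θ' w hm]

lemma coeff_cycDeriv_eq_map {K : Type} [CommRing K] {CK : CompletePathAlgebra K V}
    (f : k →+* K) {φ : C.A} {φK : CK.A}
    (hφ : ∀ (i j : V) (p : Path i j), CK.coeff p φK = f (C.coeff p φ))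
    {i j m m' : V} (a : i ⟶ j) (w : Path m m') :
    CK.coeff w (CK.cycDeriv a φK) = f (C.coeff w (C.cycDeriv a φ)) := by
  by_cases hm : m = j ∧ m' = i
  · obtain ⟨rfl, rfl⟩ := hm
    simp only [coeff_cycDeriv, cycCoeff_apply, hφ, map_list_sum, List.map_map,
      Function.comp_def]
  · rw [coeff_cycDeriv_eq_zero a φK w hm, coeff_cycDeriv_eq_zero a φ w hm, map_zero]

end CompletePathAlgebra

/-- Coefficient families `c_{a,u,v}` of cyclic derivations `Σ c_{a,u,v} u D_a v`, indexed by an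
arrow `a : i ⟶ j` and paths `u : s ⟶ m`, `v : m' ⟶ t`. -/
abbrev CycCoeffs (k V : Type) [CommRing k] [Quiver.{1} V] : Type 1 :=
  ∀ (i j : V), (i ⟶ j) → ∀ (s m : V), Path s m → ∀ (m' t : V), Path m' t → k

/-- Coefficients `G a w` of a family of series indexed by the arrows, such as the cyclic
derivatives `D_a φ` of a potential. -/
abbrev ArrowCoeffs (k V : Type) [CommRing k] [Quiver.{1} V] : Type 1 :=
  ∀ (i j : V), (i ⟶ j) → ∀ (m m' : V), Path m m' → k

section

variable {k : Type} [CommRing k]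

def CompletePathAlgebra.cycDerivCoeffs (C : CompletePathAlgebra k V) (φ : C.A) :
    ArrowCoeffs k V :=
  fun _ _ a _ _ w => C.coeff w (C.cycDeriv a φ)

namespace CycCoeffs

/-- The derivations of `cDer⁺`: no term `D_a` appears without a nontrivial factor. -/
def IsPlus (c : CycCoeffs k V) : Prop :=
  ∀ (i j : V) (a : i ⟶ j) (s m : V) (u : Path s m) (m' t : V) (v : Path m' t),
    u.length = 0 → v.length = 0 → c i j a s m u m' t v = 0

lemma isPlus_zero : (0 : CycCoeffs k V).IsPlus := fun _ _ _ _ _ _ _ _ _ _ _ => rfl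

def map {K : Type} [CommRing K] (f : k →+* K) (c : CycCoeffs k V) : CycCoeffs K V :=
  fun i j a s m u m' t v => f (c i j a s m u m' t v)

lemma IsPlus.map {K : Type} [CommRing K] (f : k →+* K) {c : CycCoeffs k V} (hc : c.IsPlus) :
    (c.map f).IsPlus := by
  intro i j a s m u m' t v hu hv
  simp [CycCoeffs.map, hc i j a s m u m' t v hu hv]

/-- Right multiplication of a cyclic derivation by an arrow `e`. -/
def mulRightArrow {t₀ t₁ : V} (e : t₀ ⟶ t₁) (c : CycCoeffs k V) : CycCoeffs k V :=
  fun i j a s m u m' _ v =>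
    match v with
    | .nil => 0
    | .cons (b := m₀) v₀ e' =>
      if h : (⟨m₀, _, e'⟩ : Σ x y : V, x ⟶ y) = ⟨t₀, t₁, e⟩ then
        c i j a s m u m' t₀ (cast (by rw [show m₀ = t₀ from congrArg Sigma.fst h]) v₀)
      else 0

variable {t₀ t₁ : V} (e : t₀ ⟶ t₁) (c : CycCoeffs k V)

lemma mulRightArrow_nil (i j : V) (a : i ⟶ j) (s m : V) (u : Path s m) (m' : V) :
    mulRightArrow e c i j a s m u m' m' .nil = 0 := rfl

lemma mulRightArrow_cons_self (i j : V) (a : i ⟶ j) (s m : V) (u : Path s m) (m' : V)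
    (v : Path m' t₀) : mulRightArrow e c i j a s m u m' t₁ (v.cons e) = c i j a s m u m' t₀ v := by
  simp only [mulRightArrow, dif_pos]
  rfl

lemma mulRightArrow_cons_of_ne {m₀ t : V} {e' : m₀ ⟶ t}
    (h : (⟨m₀, t, e'⟩ : Σ x y : V, x ⟶ y) ≠ ⟨t₀, t₁, e⟩) (i j : V) (a : i ⟶ j) (s m : V)
    (u : Path s m) (m' : V) (v : Path m' m₀) :
    mulRightArrow e c i j a s m u m' t (v.cons e') = 0 := by
  simp only [mulRightArrow, dif_neg h]

lemma isPlus_mulRightArrow : (mulRightArrow e c).IsPlus := by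
  intro i j a s m u m' t v _ hv
  cases v with
  | nil => rfl
  | cons => simp at hv

end CycCoeffs

section ApplyCoeff

variable [Fintype V] [∀ i j : V, Fintype (i ⟶ j)]

/-- The coefficient at `q` of `Σ c_{a,u,v} u g_a v`, where `g_a` has coefficients `G a`. -/
def applyCoeff (G : ArrowCoeffs k V) {s t : V} (q : Path s t) : CycCoeffs k V →ₗ[k] k where
  toFun c := ((pathSplits q).map fun s₁ => ((pathSplits s₁.2.2).map fun s₂ =>
    ∑ i : V, ∑ j : V, ∑ a : i ⟶ j,
      c i j a s s₁.1 s₁.2.1 s₂.1 t s₂.2.2 * G i j a s₁.1 s₂.1 s₂.2.1).sum).sum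
  map_add' c c' := by
    simp only [Pi.add_apply, add_mul, Finset.sum_add_distrib, List.sum_map_add]
  map_smul' r c := by
    simp only [Pi.smul_apply, smul_eq_mul, mul_assoc, ← Finset.mul_sum, List.sum_map_mul_left,
      RingHom.id_apply]

lemma CompletePathAlgebra.mem_imCycPlus_iff (C : CompletePathAlgebra k V) (φ : C.A) (x : C.A) :
    x ∈ C.imCycPlus φ ↔ ∃ c : CycCoeffs k V, c.IsPlus ∧
      ∀ (s t : V) (q : Path s t), C.coeff q x = applyCoeff (C.cycDerivCoeffs φ) q c :=
  Iff.rfl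

variable (G : ArrowCoeffs k V)

lemma applyCoeff_congr {s t : V} (q : Path s t) {c c' : CycCoeffs k V}
    (h : ∀ (i j : V) (a : i ⟶ j) (s' m : V) (u : Path s' m) (m' t' : V) (v : Path m' t'),
      v.length ≤ q.length → c i j a s' m u m' t' v = c' i j a s' m u m' t' v) :
    applyCoeff G q c = applyCoeff G q c' := by
  refine congrArg List.sum (List.map_congr_left fun s₁ hs₁ => ?_)
  refine congrArg List.sum (List.map_congr_left fun s₂ hs₂ => ?_)
  have := length_add_length_of_mem_pathSplits hs₁
  have := length_add_length_of_mem_pathSplits hs₂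
  simp only [h _ _ _ _ _ _ _ _ _ (by omega : s₂.2.2.length ≤ q.length)]

/-- Longer middle factors only occur with trivial `u` and `v`, which `cDer⁺` excludes. -/
lemma applyCoeff_map {K : Type} [CommRing K] (f : k →+* K) {G' : ArrowCoeffs K V} {r : ℕ}
    (hG : ∀ (i j : V) (a : i ⟶ j) (m m' : V) (w : Path m m'), w.length ≤ r →
      G' i j a m m' w = f (G i j a m m' w))
    {c : CycCoeffs k V} (hc : c.IsPlus) {s t : V} (q : Path s t) (hq : q.length ≤ r + 1) :
    applyCoeff G' q (c.map f) = f (applyCoeff G q c) := by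
  simp only [applyCoeff, LinearMap.coe_mk, AddHom.coe_mk, map_list_sum, map_sum, map_mul,
    List.map_map, Function.comp_def]
  refine congrArg List.sum (List.map_congr_left fun s₁ hs₁ => ?_)
  refine congrArg List.sum (List.map_congr_left fun s₂ hs₂ => ?_)
  refine Finset.sum_congr rfl fun i _ => Finset.sum_congr rfl fun j _ =>
    Finset.sum_congr rfl fun a _ => ?_
  have := length_add_length_of_mem_pathSplits hs₁
  have := length_add_length_of_mem_pathSplits hs₂
  by_cases hw : s₂.2.1.length ≤ r
  · rw [hG _ _ _ _ _ _ hw]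
    rfl
  · simp [CycCoeffs.map, hc _ _ _ _ _ _ _ _ _ (by omega : s₁.2.1.length = 0)
      (by omega : s₂.2.2.length = 0)]

/-- `c` solves for the path `P` in degrees `≤ n`: its derivation sends the potential to `P`
modulo paths of length `> n`. -/
def SolvesUpTo (n : ℕ) {s t : V} (P : Path s t) (c : CycCoeffs k V) : Prop :=
  ∀ (s' t' : V) (q : Path s' t'), q.length ≤ n →
    applyCoeff G q c = if (⟨s, t, P⟩ : Σ x y : V, Path x y) = ⟨s', t', q⟩ then 1 else 0

variable {t₀ t₁ : V} (e : t₀ ⟶ t₁) (c : CycCoeffs k V)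

lemma applyCoeff_mulRightArrow_nil (s : V) :
    applyCoeff G (.nil : Path s s) (c.mulRightArrow e) = 0 := by
  simp [applyCoeff, pathSplits, CycCoeffs.mulRightArrow_nil]

lemma applyCoeff_mulRightArrow_cons_self {s : V} (q : Path s t₀) :
    applyCoeff G (q.cons e) (c.mulRightArrow e) = applyCoeff G q c := by
  simp [applyCoeff, pathSplits, CycCoeffs.mulRightArrow_nil, CycCoeffs.mulRightArrow_cons_self,
    Function.comp_def]

lemma applyCoeff_mulRightArrow_cons_of_ne {s m₀ t : V} {e' : m₀ ⟶ t}
    (h : (⟨m₀, t, e'⟩ : Σ x y : V, x ⟶ y) ≠ ⟨t₀, t₁, e⟩) (q : Path s m₀) :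
    applyCoeff G (q.cons e') (c.mulRightArrow e) = 0 := by
  simp [applyCoeff, pathSplits, CycCoeffs.mulRightArrow_nil,
    CycCoeffs.mulRightArrow_cons_of_ne e c h, Function.comp_def]

lemma applyCoeff_sum_range_length (d : ℕ → CycCoeffs k V)
    (hd : ∀ n (i j : V) (a : i ⟶ j) (s m : V) (u : Path s m) (m' t : V) (v : Path m' t),
      v.length < n → d n i j a s m u m' t v = 0) {s t : V} (q : Path s t) :
    applyCoeff G q (fun i j a s m u m' t v => ∑ n ∈ Finset.range (v.length + 1),
        d n i j a s m u m' t v) =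
      ∑ n ∈ Finset.range (q.length + 1), applyCoeff G q (d n) := by
  rw [← map_sum]
  refine applyCoeff_congr G q fun i j a s' m u m' t' v hv => ?_
  simp only [Finset.sum_apply]
  refine Finset.sum_subset (Finset.range_subset_range.mpr (by omega)) fun n _ hn => ?_
  exact hd n i j a s' m u m' t' v (by simpa using hn)

end ApplyCoeff

end

section Nakayama

variable {K : Type} [CommRing K] (G : ArrowCoeffs K V) (r : ℕ)
  (b : ∀ s t : V, Path s t → CycCoeffs K V)

/-- Given solutions `b p` for the paths `p` of length `r + 1`, the solution for `p.comp w` is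
`b p` multiplied on the right by `w`, one arrow at a time. -/
def liftCoeffs : ∀ {s t : V}, Path s t → CycCoeffs K V
  | s, _, .nil => b s s .nil
  | s, t, .cons p e =>
    if r + 1 ≤ p.length then (liftCoeffs p).mulRightArrow e else b s t (p.cons e)

lemma isPlus_liftCoeffs (hb : ∀ (s t : V) (P : Path s t), (b s t P).IsPlus) {s t : V}
    (P : Path s t) : (liftCoeffs r b P).IsPlus := by
  cases P with
  | nil => rw [liftCoeffs]; exact hb _ _ _
  | cons p e =>
    rw [liftCoeffs]
    split_ifs
    exacts [CycCoeffs.isPlus_mulRightArrow _ _, hb _ _ _]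

lemma liftCoeffs_apply_of_length_lt {s t : V} (P : Path s t) (i j : V) (a : i ⟶ j) (s' m : V)
    (u : Path s' m) (m' t' : V) (v : Path m' t') (hv : v.length + (r + 1) < P.length) :
    liftCoeffs r b P i j a s' m u m' t' v = 0 := by
  induction P generalizing t' with
  | nil => simp at hv
  | cons p e ih =>
    rw [Path.length_cons] at hv
    rw [liftCoeffs, if_pos (by omega)]
    cases v with
    | nil => rfl
    | cons v e' =>
      by_cases he : (⟨_, _, e'⟩ : Σ x y : V, x ⟶ y) = ⟨_, _, e⟩
      · cases he
        rw [CycCoeffs.mulRightArrow_cons_self]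
        exact ih _ v (by simp only [Path.length_cons] at hv; omega)
      · exact CycCoeffs.mulRightArrow_cons_of_ne _ _ he _ _ _ _ _ _ _ _

variable [Fintype V] [∀ i j : V, Fintype (i ⟶ j)]

def pathsOfLength : ℕ → Finset (Σ s t : V, Path s t)
  | 0 => Finset.univ.image fun s : V => ⟨s, s, .nil⟩
  | n + 1 => (pathsOfLength n).biUnion fun P => Finset.univ.biUnion fun t : V =>
      (Finset.univ : Finset (P.2.1 ⟶ t)).image fun e => ⟨P.1, t, P.2.2.cons e⟩

lemma mem_pathsOfLength {n : ℕ} {P : Σ s t : V, Path s t} :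
    P ∈ pathsOfLength n ↔ P.2.2.length = n := by
  obtain ⟨s, t, p⟩ := P
  induction n generalizing s t with
  | zero =>
    simp only [pathsOfLength, Finset.mem_image, Finset.mem_univ, true_and]
    constructor
    · rintro ⟨s', h⟩
      cases h
      rfl
    · intro hp
      cases p with
      | nil => exact ⟨s, rfl⟩
      | cons => simp at hp
  | succ n ih =>
    simp only [pathsOfLength, Finset.mem_biUnion, Finset.mem_univ, Finset.mem_image, true_and]
    constructor
    · rintro ⟨⟨s', m, p'⟩, hp', t', e', h⟩
      cases h
      simpa using (ih _ _ _).mp hp'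
    · intro hp
      cases p with
      | nil => simp at hp
      | cons p e => exact ⟨⟨s, _, p⟩, (ih _ _ _).mpr (by simpa using hp), t, e, rfl⟩

lemma solvesUpTo_liftCoeffs
    (hb : ∀ (s t : V) (P : Path s t), P.length = r + 1 → SolvesUpTo G (r + 1) P (b s t P))
    {s t : V} (P : Path s t) (hP : r + 1 ≤ P.length) :
    SolvesUpTo G P.length P (liftCoeffs r b P) := by
  induction P with
  | nil => simp at hP
  | cons p e ih =>
    intro s' t' q hq
    rw [Path.length_cons] at hP hq
    rw [liftCoeffs]
    by_cases hp : r + 1 ≤ p.length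
    · rw [if_pos hp]
      cases q with
      | nil =>
        rw [applyCoeff_mulRightArrow_nil, if_neg]
        intro h
        cases h
      | cons q e' =>
        by_cases he : (⟨_, _, e'⟩ : Σ x y : V, x ⟶ y) = ⟨_, _, e⟩
        · cases he
          rw [applyCoeff_mulRightArrow_cons_self, ih hp _ _ q (by simpa using hq)]
          congr 1
          exact propext ⟨fun h => by cases h; rfl, fun h => by cases h; rfl⟩
        · rw [applyCoeff_mulRightArrow_cons_of_ne _ _ _ he, if_neg]
          intro h
          cases h
          exact he rfl
    · rw [if_neg hp]
      exact hb _ _ _ (by simp only [Path.length_cons]; omega) _ _ q (by omega)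

/-- Solves, by `liftCoeffs`, for the coefficients of `R` at all paths of length `n` at once. -/
def stageCoeffs (R : ∀ s t : V, Path s t → K) (n : ℕ) : CycCoeffs K V :=
  ∑ P ∈ pathsOfLength n, R P.1 P.2.1 P.2.2 • liftCoeffs r b P.2.2

lemma stageCoeffs_apply_of_length_lt (R : ∀ s t : V, Path s t → K) {n : ℕ} (i j : V)
    (a : i ⟶ j) (s m : V) (u : Path s m) (m' t : V) (v : Path m' t)
    (hv : v.length + (r + 1) < n) : stageCoeffs r b R n i j a s m u m' t v = 0 := by
  simp only [stageCoeffs, Finset.sum_apply, Pi.smul_apply, smul_eq_mul]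
  refine Finset.sum_eq_zero fun P hP => ?_
  rw [liftCoeffs_apply_of_length_lt r b P.2.2 i j a s m u m' t v
    (by rw [mem_pathsOfLength.mp hP]; exact hv), mul_zero]

lemma isPlus_stageCoeffs (hb : ∀ (s t : V) (P : Path s t), (b s t P).IsPlus)
    (R : ∀ s t : V, Path s t → K) (n : ℕ) : (stageCoeffs r b R n).IsPlus := by
  intro i j a s m u m' t v hu hv
  simp only [stageCoeffs, Finset.sum_apply, Pi.smul_apply, smul_eq_mul]
  exact Finset.sum_eq_zero fun P _ => by
    rw [isPlus_liftCoeffs r b hb P.2.2 i j a s m u m' t v hu hv, mul_zero]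

lemma applyCoeff_stageCoeffs
    (hb : ∀ (s t : V) (P : Path s t), P.length = r + 1 → SolvesUpTo G (r + 1) P (b s t P))
    {R : ∀ s t : V, Path s t → K} {n : ℕ} (hn : r + 1 ≤ n)
    (hR : ∀ (s t : V) (q : Path s t), q.length < n → R s t q = 0)
    {s t : V} (q : Path s t) (hq : q.length ≤ n) :
    applyCoeff G q (stageCoeffs r b R n) = R s t q := by
  have hterm : ∀ P ∈ pathsOfLength n, R P.1 P.2.1 P.2.2 • applyCoeff G q (liftCoeffs r b P.2.2) =
      if P = ⟨s, t, q⟩ then R P.1 P.2.1 P.2.2 else 0 := fun P hP => by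
    have hP := mem_pathsOfLength.mp hP
    rw [solvesUpTo_liftCoeffs G r b hb P.2.2 (by omega) _ _ q (by omega), smul_eq_mul, mul_ite,
      mul_one, mul_zero]
  rw [stageCoeffs, map_sum]
  simp only [map_smul]
  rw [Finset.sum_congr rfl hterm, Finset.sum_ite_eq']
  by_cases hqn : q.length = n
  · rw [if_pos (mem_pathsOfLength.mpr hqn)]
  · rw [if_neg fun h => hqn (mem_pathsOfLength.mp h), hR s t q (by omega)]

/-- What is left of `x` after the corrections in degrees `r + 1, …, r + n`. -/
def remainder (x : ∀ s t : V, Path s t → K) : ℕ → ∀ s t : V, Path s t → K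
  | 0, s, t, q => x s t q
  | n + 1, s, t, q =>
    remainder x n s t q - applyCoeff G q (stageCoeffs r b (remainder x n) (r + 1 + n))

lemma remainder_eq_zero
    (hb : ∀ (s t : V) (P : Path s t), P.length = r + 1 → SolvesUpTo G (r + 1) P (b s t P))
    {x : ∀ s t : V, Path s t → K} (hx : ∀ (s t : V) (q : Path s t), q.length < r + 1 → x s t q = 0)
    (n : ℕ) {s t : V} (q : Path s t) (hq : q.length < r + 1 + n) :
    remainder G r b x n s t q = 0 := by
  induction n generalizing s t with
  | zero => exact hx s t q hq
  | succ n ih =>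
    rw [remainder, applyCoeff_stageCoeffs G r b hb (by omega) (fun _ _ => ih) q (by omega),
      sub_self]

/-- Topological Nakayama: solutions for the paths of length `r + 1`, exact up to degree `r + 1`,
yield solutions for every series in degrees `≥ r + 1`. -/
theorem exists_isPlus_applyCoeff_eq
    (hbase : ∀ (s t : V) (P : Path s t), P.length = r + 1 →
      ∃ c : CycCoeffs K V, c.IsPlus ∧ SolvesUpTo G (r + 1) P c)
    {x : ∀ s t : V, Path s t → K}
    (hx : ∀ (s t : V) (q : Path s t), q.length < r + 1 → x s t q = 0) :
    ∃ c : CycCoeffs K V, c.IsPlus ∧ ∀ (s t : V) (q : Path s t), x s t q = applyCoeff G q c := by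
  have hbase' : ∀ (s t : V) (P : Path s t), ∃ c : CycCoeffs K V, c.IsPlus ∧
      (P.length = r + 1 → SolvesUpTo G (r + 1) P c) := fun s t P => by
    by_cases hP : P.length = r + 1
    · obtain ⟨c, hc, hcP⟩ := hbase s t P hP
      exact ⟨c, hc, fun _ => hcP⟩
    · exact ⟨0, CycCoeffs.isPlus_zero, fun h => absurd h hP⟩
  choose b hb_plus hb using hbase'
  set d : ℕ → CycCoeffs K V := fun n => stageCoeffs r b (remainder G r b x n) (r + 1 + n)
  have hd : ∀ n (i j : V) (a : i ⟶ j) (s m : V) (u : Path s m) (m' t : V) (v : Path m' t),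
      v.length < n → d n i j a s m u m' t v = 0 := fun n _ _ _ _ _ _ _ _ _ hv =>
    stageCoeffs_apply_of_length_lt r b _ _ _ _ _ _ _ _ _ _ (by omega)
  refine ⟨fun i j a s m u m' t v => ∑ n ∈ Finset.range (v.length + 1), d n i j a s m u m' t v,
    fun i j a s m u m' t v hu hv => Finset.sum_eq_zero fun n _ =>
      isPlus_stageCoeffs r b hb_plus _ _ i j a s m u m' t v hu hv, fun s t q => ?_⟩
  have htelescope : ∀ n, applyCoeff G q (d n) =
      remainder G r b x n s t q - remainder G r b x (n + 1) s t q := fun n => by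
    rw [remainder, sub_sub_cancel]
  rw [applyCoeff_sum_range_length G d hd q, Finset.sum_congr rfl fun n _ => htelescope n,
    Finset.sum_range_sub', remainder_eq_zero G r b hb hx (q.length + 1) q (by omega), sub_zero]
  rfl

end Nakayama

lemma exists_isPlus_solvesUpTo_of_jet [Fintype V] [∀ i j : V, Fintype (i ⟶ j)]
    {k K : Type} [CommRing k] [CommRing K] (f : k →+* K) {C : CompletePathAlgebra k V}
    {CK : CompletePathAlgebra K V} {φ : C.A} {θ : CK.A} {r : ℕ}
    (hjet : ∀ (i j : V) (a : i ⟶ j) (m m' : V) (w : Path m m'), w.length ≤ r →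
      CK.coeff w (CK.cycDeriv a θ) = f (C.coeff w (C.cycDeriv a φ)))
    (h1 : (C.mpow (r + 1) : Set C.A) ⊆ C.imCycPlus φ) (s t : V) (P : Path s t)
    (hP : P.length = r + 1) :
    ∃ c : CycCoeffs K V, c.IsPlus ∧ SolvesUpTo (CK.cycDerivCoeffs θ) (r + 1) P c := by
  have hP_mem : C.pathE P ∈ C.mpow (r + 1) := fun s' t' q hq => by
    rw [C.coeff_pathE, if_neg]
    intro h
    cases h
    omega
  obtain ⟨c, hc, hcP⟩ := (C.mem_imCycPlus_iff φ _).mp (h1 hP_mem)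
  refine ⟨c.map f, hc.map f, fun s' t' q hq => ?_⟩
  rw [applyCoeff_map (C.cycDerivCoeffs φ) f (G' := CK.cycDerivCoeffs θ) hjet hc q hq, ← hcP,
    C.coeff_pathE]
  split_ifs <;> simp

end

/-- (Jet stability of the tangent-ideal condition.)  Let `Q`
be a finite quiver, `Φ` a potential of `ℂ̂Q` (representative `φ`) with
`Φ_*(cDer⁺) ⊇ m̂^{r+1}`, and let `Θ` (representative `θ`) be a potential of the
complete path algebra over the ring `K` of entire functions on `ℂ` with the
same `(r+1)`-jet as `Φ`.  Then `Θ_*(cDer⁺) ⊇ n̂^{r+1}`, where `n̂` is the arrow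
ideal over `K`. -/
theorem jet_stability_of_tangent_ideal
    {V : Type} [Quiver.{1} V] [Fintype V] [∀ i j : V, Fintype (i ⟶ j)]
    (C : CompletePathAlgebra ℂ V) (CK : CompletePathAlgebra (↥Entire) V)
    (ε : C.A →+* CK.A)
    (hε : ∀ (i j : V) (p : Quiver.Path i j) (x : C.A),
      CK.coeff p (ε x) = algebraMap ℂ ↥Entire (C.coeff p x))
    (φ : C.A) (θ : CK.A) (r : ℕ)
    (h1 : (C.mpow (r + 1) : Set C.A) ⊆ C.imCycPlus φ)
    (h2 : θ - ε φ ∈ CK.commCl ⊔ CK.mpow (r + 2)) :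
    (CK.mpow (r + 1) : Set CK.A) ⊆ CK.imCycPlus θ := by
  have hjet : ∀ (i j : V) (a : i ⟶ j) (m m' : V) (w : Path m m'), w.length ≤ r →
      CK.coeff w (CK.cycDeriv a θ) = algebraMap ℂ Entire (C.coeff w (C.cycDeriv a φ)) :=
    fun i j a m m' w hw => (CompletePathAlgebra.coeff_cycDeriv_eq_of_sub_mem a h2 w hw).trans
      (CompletePathAlgebra.coeff_cycDeriv_eq_map _ (fun i j p => hε i j p φ) a w)
  intro x hx
  exact exists_isPlus_applyCoeff_eq _ r (exists_isPlus_solvesUpTo_of_jet _ hjet h1) hx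
end
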